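/- ∂_x^N [ (x-1)^{M+L-N-1} / x^{M-N+1} ] = (M!/(M-N)!) · (x-1)^{M+L-2N-1} x^{-M-1} · ₂F₁(-N, L-N-1; -M; x), for integers 0 ≤ N ≤ M and x ∉ {0}. -/

import Mathlib

/-!
By the Leibniz rule, the `N`-th derivative of `(t - 1) ^ a * t ^ b` at `x` equals
`(x - 1) ^ (a - N) * x ^ (b - N) * ∑ₖ C(N, k) (a)ₖ (b)_{N-k} (x - 1) ^ (N - k) * x ^ k`,
with falling factorials `(·)ₖ`. Expanding `(x - 1) ^ (N - k)` and collecting powers of `x`, the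
Chu–Vandermonde identity collapses the coefficient of `x ^ i` to
`(-1) ^ (N - i) C(N, i) (b)_{N-i} (a + b - N + i)ᵢ`. For `a = M + L - N - 1` and `b = N - M - 1`
this is `M! / (M - N)!` times the `i`-th coefficient of `₂F₁(-N, L - N - 1; -M; x)`.
-/

open scoped BigOperators

/-- The terminating Gauss hypergeometric polynomial `₂F₁(-N, b; c; x)`. -/
noncomputable def F21term (N : ℕ) (b c x : ℝ) : ℝ :=
  ∑ k ∈ Finset.range (N + 1),
    (ascPochhammer ℝ k).eval (-(N : ℝ)) * (ascPochhammer ℝ k).eval b /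
      (ascPochhammer ℝ k).eval c * x ^ k / (Nat.factorial k : ℝ)

open Finset Polynomial

section Pochhammer

variable {R : Type*} [CommRing R]

theorem descPochhammer_eval_eq_smeval (n : ℕ) (r : R) :
    (descPochhammer R n).eval r = (descPochhammer ℤ n).smeval r := by
  rw [← descPochhammer_map (algebraMap ℤ R), eval_map, ← aeval_def, aeval_eq_smeval]

theorem descPochhammer_eval_add (n : ℕ) (r s : R) :
    (descPochhammer R n).eval (r + s) = ∑ k ∈ range (n + 1),
      (n.choose k : R) * (descPochhammer R k).eval r * (descPochhammer R (n - k)).eval s := by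
  simp only [descPochhammer_eval_eq_smeval, Ring.descPochhammer_smeval_add n (Commute.all r s),
    Nat.sum_antidiagonal_eq_sum_range_succ (fun i j => (n.choose i : R) *
      ((descPochhammer ℤ i).smeval r * (descPochhammer ℤ j).smeval s)), mul_assoc]

theorem descPochhammer_eval_eq_mul_of_le (r : R) {m n : ℕ} (h : m ≤ n) :
    (descPochhammer R n).eval r =
      (descPochhammer R m).eval r * (descPochhammer R (n - m)).eval (r - m) := by
  conv_lhs => rw [← Nat.add_sub_cancel' h, ← descPochhammer_mul]
  simp

theorem sum_choose_mul_descPochhammer_mul_choose (a b : R) {i n : ℕ} (hi : i ≤ n) :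
    ∑ k ∈ range (i + 1), (n.choose k : R) * (descPochhammer R k).eval a *
        (descPochhammer R (n - k)).eval b * ((n - k).choose (i - k) : R) =
      (n.choose i : R) * (descPochhammer R (n - i)).eval b *
        (descPochhammer R i).eval (a + (b - (n - i : ℕ))) := by
  rw [descPochhammer_eval_add, mul_sum]
  refine sum_congr rfl fun k hk => ?_
  have hki : k ≤ i := Nat.lt_succ_iff.mp (mem_range.mp hk)
  have hchoose : (n.choose k : R) * ((n - k).choose (i - k) : R) = n.choose i * i.choose k := by
    rw [← Nat.cast_mul, ← Nat.cast_mul, Nat.choose_mul hki]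
  have hsplit : (descPochhammer R (n - k)).eval b = (descPochhammer R (n - i)).eval b *
      (descPochhammer R (i - k)).eval (b - (n - i : ℕ)) := by
    rw [descPochhammer_eval_eq_mul_of_le b (by omega : n - i ≤ n - k),
      show n - k - (n - i) = i - k by omega]
  rw [hsplit]
  linear_combination (descPochhammer R k).eval a * (descPochhammer R (n - i)).eval b *
      (descPochhammer R (i - k)).eval (b - (n - i : ℕ)) * hchoose

theorem sum_mul_sub_one_pow_mul_pow (c : ℕ → R) (n : ℕ) (x : R) :
    ∑ k ∈ range (n + 1), c k * (x - 1) ^ (n - k) * x ^ k =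
      ∑ i ∈ range (n + 1),
        (-1) ^ (n - i) * (∑ k ∈ range (i + 1), c k * ((n - k).choose (i - k) : R)) * x ^ i := by
  have hexpand : ∀ k ∈ range (n + 1), c k * (x - 1) ^ (n - k) * x ^ k =
      ∑ i ∈ Ico k (n + 1), (-1) ^ (n - i) * (c k * ((n - k).choose (i - k) : R)) * x ^ i := by
    intro k hk
    have hkn : k ≤ n := Nat.lt_succ_iff.mp (mem_range.mp hk)
    rw [sum_Ico_eq_sum_range, show n + 1 - k = n - k + 1 by omega, sub_pow, mul_sum, sum_mul]
    refine sum_congr rfl fun j hj => ?_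
    have hj : j ≤ n - k := Nat.lt_succ_iff.mp (mem_range.mp hj)
    obtain ⟨d, hd⟩ : ∃ d, n - k = j + d := ⟨n - k - j, by omega⟩
    rw [show n - (k + j) = d by omega, Nat.add_sub_cancel_left, hd, pow_add, pow_add]
    have hsq : (-1 : R) ^ j * (-1) ^ j = 1 := by rw [← mul_pow, neg_one_mul, neg_neg, one_pow]
    linear_combination (c k * (-1) ^ d * x ^ (j + k) * ((j + d).choose j : R)) * hsq
  rw [sum_congr rfl hexpand, sum_comm' (t' := range (n + 1)) (s' := fun i => range (i + 1))]
  · simp only [mul_sum, sum_mul]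
  · intro k i
    simp only [mem_range, mem_Ico]
    omega

theorem factorial_mul_neg_one_pow_mul_descPochhammer_eval {i N M : ℕ} (hi : i ≤ N)
    (hNM : N ≤ M) :
    ((M - N).factorial : R) *
        ((-1) ^ (N - i) * (descPochhammer R (N - i)).eval ((N : R) - M - 1)) =
      (M - i).factorial := by
  have hneg : -((N : R) - M - 1) = ((M - N + 1 : ℕ) : R) := by
    push_cast [Nat.cast_sub hNM]; ring
  rw [← ascPochhammer_eval_neg_eq_descPochhammer, hneg, ← ascPochhammer_eval_cast,
    ascPochhammer_nat_eq_ascFactorial, ← Nat.cast_mul, Nat.factorial_mul_ascFactorial,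
    show M - N + (N - i) = M - i by omega]

theorem ascPochhammer_eval_neg_natCast (n i : ℕ) :
    (ascPochhammer R i).eval (-(n : R)) = (-1) ^ i * n.descFactorial i := by
  rw [ascPochhammer_eval_neg_eq_descPochhammer, descPochhammer_eval_eq_descFactorial]

end Pochhammer

theorem neg_one_pow_mul_choose_mul_descPochhammer_eval {K : Type*} [Field K] [CharZero K] (β : K)
    {i N M : ℕ} (hi : i ≤ N) (hNM : N ≤ M) :
    (-1) ^ (N - i) * ((N.choose i : K) * (descPochhammer K (N - i)).eval ((N : K) - M - 1) *
        (descPochhammer K i).eval (β + i - 1)) =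
      (M.factorial / (M - N).factorial : K) * ((ascPochhammer K i).eval (-(N : K)) *
        (ascPochhammer K i).eval β / (ascPochhammer K i).eval (-(M : K)) / i.factorial) := by
  have hfac := factorial_mul_neg_one_pow_mul_descPochhammer_eval (R := K) hi hNM
  have hM : ((M - i).factorial : K) * M.descFactorial i = M.factorial := by
    exact_mod_cast Nat.factorial_mul_descFactorial (hi.trans hNM)
  have hN : (i.factorial : K) * N.choose i = N.descFactorial i := by
    exact_mod_cast (Nat.descFactorial_eq_factorial_mul_choose N i).symm
  have hMi : (M.descFactorial i : K) ≠ 0 := by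
    exact_mod_cast (Nat.descFactorial_pos.mpr (hi.trans hNM)).ne'
  rw [descPochhammer_eval_eq_ascPochhammer K (β + i - 1), show β + i - 1 - i + 1 = β by ring,
    ascPochhammer_eval_neg_natCast, ascPochhammer_eval_neg_natCast]
  field_simp
  rw [eq_div_iff (by simp [Nat.factorial_ne_zero])]
  linear_combination (ascPochhammer K i).eval β *
    ((N.choose i * i.factorial * M.descFactorial i : K) * hfac +
      (M.descFactorial i * (M - i).factorial : K) * hN + (N.descFactorial i : K) * hM)

section Calculus

variable {𝕜 : Type*} [NontriviallyNormedField 𝕜]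

theorem contDiffAt_zpow {m : ℤ} {x : 𝕜} (hx : x ≠ 0) {n : WithTop ℕ∞} :
    ContDiffAt 𝕜 n (fun t => t ^ m) x := by
  cases m with
  | ofNat k => simp only [Int.ofNat_eq_natCast, zpow_natCast]; fun_prop
  | negSucc k =>
    simp only [zpow_negSucc]
    exact (contDiffAt_fun_id.pow (k + 1)).inv (pow_ne_zero _ hx)

theorem iteratedDeriv_zpow (m : ℤ) (k : ℕ) (x : 𝕜) :
    iteratedDeriv k (fun t => t ^ m) x = (descPochhammer 𝕜 k).eval (m : 𝕜) * x ^ (m - k) := by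
  rw [iteratedDeriv_eq_iterate, iter_deriv_zpow, descPochhammer_eval_eq_prod_range]

theorem iteratedDeriv_sub_zpow_mul_zpow (a b : ℤ) (n : ℕ) {c x : 𝕜} (hx : x ≠ 0)
    (hxc : x ≠ c) :
    iteratedDeriv n (fun t => (t - c) ^ a * t ^ b) x =
      (x - c) ^ (a - n) * x ^ (b - n) * ∑ k ∈ range (n + 1), (n.choose k : 𝕜) *
        (descPochhammer 𝕜 k).eval (a : 𝕜) * (descPochhammer 𝕜 (n - k)).eval (b : 𝕜) *
          (x - c) ^ (n - k) * x ^ k := by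
  have hxc' : x - c ≠ 0 := sub_ne_zero.mpr hxc
  have hshift : ContDiffAt 𝕜 n (fun t => (t - c) ^ a) x :=
    (contDiffAt_zpow hxc').comp x (contDiffAt_fun_id.sub contDiffAt_const)
  rw [iteratedDeriv_fun_mul hshift (contDiffAt_zpow hx), mul_sum]
  refine sum_congr rfl fun k hk => ?_
  have hkn : k ≤ n := Nat.lt_succ_iff.mp (mem_range.mp hk)
  rw [iteratedDeriv_comp_sub_const k (fun t => t ^ a) c]
  beta_reduce
  rw [iteratedDeriv_zpow, iteratedDeriv_zpow,
    show a - k = a - n + (n - k : ℕ) by omega, show b - (n - k : ℕ) = b - n + k by omega,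
    zpow_add₀ hxc', zpow_add₀ hx, zpow_natCast, zpow_natCast]
  ring

end Calculus

theorem sum_choose_descPochhammer_eq_F21term (L M N : ℕ) (hNM : N ≤ M) (x : ℝ) :
    ∑ k ∈ range (N + 1), (N.choose k : ℝ) *
        (descPochhammer ℝ k).eval ((M : ℝ) + L - N - 1) *
          (descPochhammer ℝ (N - k)).eval ((N : ℝ) - M - 1) * (x - 1) ^ (N - k) * x ^ k =
      (M.factorial / (M - N).factorial : ℝ) * F21term N ((L : ℝ) - N - 1) (-(M : ℝ)) x := by
  refine (sum_mul_sub_one_pow_mul_pow (fun k => (N.choose k : ℝ) *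
    (descPochhammer ℝ k).eval ((M : ℝ) + L - N - 1) *
      (descPochhammer ℝ (N - k)).eval ((N : ℝ) - M - 1)) N x).trans ?_
  rw [F21term, mul_sum]
  refine sum_congr rfl fun i hi => ?_
  have hiN : i ≤ N := Nat.lt_succ_iff.mp (mem_range.mp hi)
  rw [sum_choose_mul_descPochhammer_mul_choose _ _ hiN,
    show (M : ℝ) + L - N - 1 + ((N : ℝ) - M - 1 - (N - i : ℕ)) = (L : ℝ) - N - 1 + i - 1 by
      push_cast [Nat.cast_sub hiN]; ring]
  linear_combination
    x ^ i * neg_one_pow_mul_choose_mul_descPochhammer_eval ((L : ℝ) - N - 1) hiN hNM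

/-- For integers `0 ≤ N ≤ M` and `x ∉ {0,1}`,
`∂_x^N [(x-1)^{M+L-N-1}/x^{M-N+1}]
  = (M!/(M-N)!)·(x-1)^{M+L-2N-1} x^{-M-1}·₂F₁(-N, L-N-1; -M; x)`. -/
theorem iteratedDeriv_formula_A (L M N : ℕ) (hNM : N ≤ M) (x : ℝ)
    (hx0 : x ≠ 0) (hx1 : x ≠ 1) :
    iteratedDeriv N
        (fun t : ℝ => (t - 1) ^ ((M : ℤ) + L - N - 1) * t ^ (-((M : ℤ) - N + 1))) x
      = ((Nat.factorial M : ℝ) / (Nat.factorial (M - N) : ℝ)) *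
          (x - 1) ^ ((M : ℤ) + L - 2 * N - 1) * x ^ (-(M : ℤ) - 1) *
          F21term N ((L : ℝ) - N - 1) (-(M : ℝ)) x := by
  have hexp_a : (M : ℤ) + L - N - 1 - N = (M : ℤ) + L - 2 * N - 1 := by ring
  have hexp_b : -((M : ℤ) - N + 1) - N = -(M : ℤ) - 1 := by ring
  have hcast_a : (((M : ℤ) + L - N - 1 : ℤ) : ℝ) = (M : ℝ) + L - N - 1 := by push_cast; ring
  have hcast_b : ((-((M : ℤ) - N + 1) : ℤ) : ℝ) = (N : ℝ) - M - 1 := by push_cast; ring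
  rw [iteratedDeriv_sub_zpow_mul_zpow _ _ N hx0 hx1, hexp_a, hexp_b, hcast_a, hcast_b,
    sum_choose_descPochhammer_eq_F21term L M N hNM x]
  ring
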